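/- Let M be a square free ℕ^n-graded module over S = k[x_1,...,x_n] and let R ⊆ [n] be maximal among subsets with M_R ≠ 0, with corresponding prime P = (x_i : i ∉ R). Then the natural map S/P ⊗_k M_R → M (sending 1 ⊗ m to m, with M_R in multidegree the characteristic vector of R) becomes an isomorphism after localization at P. -/

import Mathlib

/-!
Square-freeness makes multiplication by `x^c` a bijection `M_b → M_{b+c}` whenever
`supp c ⊆ supp b`, so every graded piece `M_b` is the image of `M_{χ(supp b)}`; by maximality
of `R`, this forces `M_b = 0` whenever `supp b ⊋ R`.

Every element of `S/P ⊗ M_R` is a sum of terms `[x^a] ⊗ m_a` with distinct `a`, and only those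
with `supp a ⊆ R` survive. `θ` sends them to the elements `x^a m_a` of the distinct degrees
`χ(R) + a`, so `θ x = 0` forces every `x^a m_a`, hence every `m_a`, to vanish: `θ` is injective.
Multiplication by `x^{χ(R)} = ∏_{i ∈ R} x_i ∉ P` moves a homogeneous element into a degree `b`
with `supp b ⊇ R`, where it is either `0` or `x^c` times an element of `M_R`, hence in the
image of `θ`.
-/

open MvPolynomial TensorProduct

noncomputable section

set_option synthInstance.maxHeartbeats 1000000
set_option maxHeartbeats 1000000

/-- Characteristic vector of a subset of `[n]`. -/
def chi (n : ℕ) (R : Finset (Fin n)) : Fin n →₀ ℕ := ∑ x ∈ R, Finsupp.single x 1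

theorem Finsupp.induction_add_single_one {σ : Type*} {p : (σ →₀ ℕ) → Prop} (zero : p 0)
    (add_single_one : ∀ c i, p c → p (c + single i 1)) (c : σ →₀ ℕ) : p c := by
  induction c using Finsupp.induction with
  | zero => exact zero
  | single_add i e c _ _ ih =>
    have : ∀ e, p (c + single i e) := fun e => by
      induction e with
      | zero => simpa using ih
      | succ e ihe => rw [single_add, ← add_assoc]; exact add_single_one _ _ ihe
    simpa [add_comm] using this e

lemma chi_apply (n : ℕ) (R : Finset (Fin n)) (i : Fin n) :
    chi n R i = if i ∈ R then 1 else 0 := by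
  classical
  simp [chi, Finsupp.finsetSum_apply, Finsupp.single_apply]

@[simp]
lemma support_chi (n : ℕ) (R : Finset (Fin n)) : (chi n R).support = R := by
  ext i
  simp [chi_apply]

lemma chi_support_le {n : ℕ} (b : Fin n →₀ ℕ) : chi n b.support ≤ b := fun i => by
  rw [chi_apply]
  split_ifs with h <;> simp_all [Nat.one_le_iff_ne_zero]

section Grading

variable {σ k M : Type*} [CommRing k] [AddCommGroup M] [Module (MvPolynomial σ k) M]

lemma X_smul_comp_monomial_smul (c : σ →₀ ℕ) (i : σ) :
    (fun m : M => (X i : MvPolynomial σ k) • m) ∘ (fun m => monomial c (1 : k) • m) =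
      fun m => monomial (c + Finsupp.single i 1) (1 : k) • m := by
  ext m
  simp only [Function.comp_apply, smul_smul, X, monomial_mul, one_mul, add_comm]

variable [Module k M]

def XSMulMem (g : (σ →₀ ℕ) → Submodule k M) : Prop :=
  ∀ (b : σ →₀ ℕ) (i : σ), ∀ m ∈ g b, (X i : MvPolynomial σ k) • m ∈ g (b + Finsupp.single i 1)

def IsSquareFree (g : (σ →₀ ℕ) → Submodule k M) : Prop :=
  ∀ b : σ →₀ ℕ, ∀ i ∈ b.support,
    (∀ m ∈ g b, (X i : MvPolynomial σ k) • m = 0 → m = 0) ∧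
    (∀ m' ∈ g (b + Finsupp.single i 1), ∃ m ∈ g b, (X i : MvPolynomial σ k) • m = m')

variable {g : (σ →₀ ℕ) → Submodule k M}

lemma mapsTo_monomial_smul (hX : XSMulMem g) (c b : σ →₀ ℕ) :
    Set.MapsTo (fun m => monomial c (1 : k) • m) (g b : Set M) (g (b + c)) := by
  induction c using Finsupp.induction_add_single_one generalizing b with
  | zero =>
    simp only [monomial_zero', C_1, one_smul, add_zero]
    exact Set.mapsTo_id _
  | add_single_one c i ih =>
    rw [← X_smul_comp_monomial_smul, ← add_assoc]
    exact Set.MapsTo.comp (fun m hm => hX _ i m hm) (ih b)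

lemma bijOn_X_smul (hX : XSMulMem g) (hsf : IsSquareFree g) {b : σ →₀ ℕ} {i : σ}
    (hi : i ∈ b.support) :
    Set.BijOn (fun m => (X i : MvPolynomial σ k) • m) (g b : Set M)
      (g (b + Finsupp.single i 1)) := by
  refine ⟨fun m hm => hX b i m hm, fun m₁ hm₁ m₂ hm₂ h => ?_, fun m' hm' => ?_⟩
  · rw [← sub_eq_zero] at h ⊢
    exact (hsf b i hi).1 _ (sub_mem hm₁ hm₂) (by rw [smul_sub, h])
  · obtain ⟨m, hm, rfl⟩ := (hsf b i hi).2 m' hm'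
    exact ⟨m, hm, rfl⟩

lemma bijOn_monomial_smul (hX : XSMulMem g) (hsf : IsSquareFree g) {b c : σ →₀ ℕ}
    (hc : c.support ⊆ b.support) :
    Set.BijOn (fun m => monomial c (1 : k) • m) (g b : Set M) (g (b + c)) := by
  induction c using Finsupp.induction_add_single_one generalizing b with
  | zero =>
    simp only [monomial_zero', C_1, one_smul, add_zero]
    exact Set.bijOn_id _
  | add_single_one c i ih =>
    classical
    rw [Finsupp.support_add_eq_union, Finset.union_subset_iff] at hc
    have hi : i ∈ (b + c).support := by
      rw [Finsupp.support_add_eq_union]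
      exact Finset.mem_union_left _ (hc.2 (by simp))
    rw [← X_smul_comp_monomial_smul, ← add_assoc]
    exact (bijOn_X_smul hX hsf hi).comp (ih hc.1)

end Grading

section Tensor

variable {k A V N : Type*} [CommRing k] [CommRing A] [Algebra k A] [AddCommGroup V] [Module k V]
  [AddCommGroup N] [Module A N]

lemma Ideal.Quotient.mk_tmul_eq_smul (I : Ideal A) (s : A) (v : V) :
    Ideal.Quotient.mk I s ⊗ₜ[k] v = s • ((1 : A ⧸ I) ⊗ₜ[k] v) := by
  rw [smul_tmul', Algebra.smul_def, mul_one, Ideal.Quotient.algebraMap_eq]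

lemma LinearMap.map_mk_tmul (I : Ideal A) (θ : ((A ⧸ I) ⊗[k] V) →ₗ[A] N) (s : A) (v : V) :
    θ (Ideal.Quotient.mk I s ⊗ₜ[k] v) = s • θ ((1 : A ⧸ I) ⊗ₜ[k] v) := by
  rw [Ideal.Quotient.mk_tmul_eq_smul, map_smul]

lemma exists_sum_mk_monomial_tmul_eq {σ : Type*} (I : Ideal (MvPolynomial σ k))
    (x : (MvPolynomial σ k ⧸ I) ⊗[k] V) :
    ∃ c : (σ →₀ ℕ) →₀ V, c.sum (fun a v => Ideal.Quotient.mk I (monomial a 1) ⊗ₜ[k] v) = x := by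
  obtain ⟨y, rfl⟩ := LinearMap.rTensor_surjective V
    (g := (Ideal.Quotient.mkₐ k I).toLinearMap) (Ideal.Quotient.mkₐ_surjective k I) x
  obtain ⟨c, rfl⟩ := TensorProduct.eq_repr_basis_left (basisMonomials σ k) y
  refine ⟨c, ?_⟩
  simp [map_finsuppSum]

end Tensor

lemma monomial_one_mem_span_X_compl_iff {σ k : Type*} [CommSemiring k] [Nontrivial k]
    {R : Finset σ} {a : σ →₀ ℕ} :
    monomial a (1 : k) ∈ Ideal.span (X '' {i | i ∉ R}) ↔ ¬ a.support ⊆ R := by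
  classical
  simp [mem_ideal_span_X_image, support_monomial, Finset.not_subset, and_comm]

section SquareFree

variable {n : ℕ} {k M : Type*} [CommRing k] [AddCommGroup M] [Module (MvPolynomial (Fin n) k) M]
  [Module k M] {g : (Fin n →₀ ℕ) → Submodule k M} {R : Finset (Fin n)}

lemma surjOn_monomial_smul_chi (hX : XSMulMem g) (hsf : IsSquareFree g) (b : Fin n →₀ ℕ) :
    Set.SurjOn (fun m => monomial (b - chi n b.support) (1 : k) • m)
      (g (chi n b.support) : Set M) (g b) := by
  have hsupp : (b - chi n b.support).support ⊆ (chi n b.support).support := by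
    simpa using Finsupp.support_tsub
  simpa [add_tsub_cancel_of_le (chi_support_le b)] using (bijOn_monomial_smul hX hsf hsupp).surjOn

lemma eq_bot_of_ssubset_support (hX : XSMulMem g) (hsf : IsSquareFree g)
    (hRmax : ∀ R' : Finset (Fin n), g (chi n R') ≠ ⊥ → R ⊆ R' → R' = R)
    {b : Fin n →₀ ℕ} (hb : R ⊂ b.support) : g b = ⊥ := by
  have hchi : g (chi n b.support) = ⊥ := by
    by_contra h
    exact hb.ne (hRmax _ h hb.subset).symm
  rw [Submodule.eq_bot_iff]
  intro m hm
  obtain ⟨m₀, hm₀, rfl⟩ := surjOn_monomial_smul_chi hX hsf b hm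
  rw [hchi, SetLike.mem_coe, Submodule.mem_bot] at hm₀
  subst hm₀
  exact smul_zero _

lemma injective_of_map_one_tmul [Nontrivial k] (hg : DirectSum.IsInternal g) (hX : XSMulMem g)
    (hsf : IsSquareFree g)
    {θ : ((MvPolynomial (Fin n) k ⧸ Ideal.span (X '' {i | i ∉ R} : Set (MvPolynomial (Fin n) k)))
      ⊗[k] g (chi n R)) →ₗ[MvPolynomial (Fin n) k] M}
    (hθ : ∀ m, θ (1 ⊗ₜ m) = m) : Function.Injective θ := by
  rw [injective_iff_map_eq_zero]
  intro x hx
  obtain ⟨c, rfl⟩ := exists_sum_mk_monomial_tmul_eq _ x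
  simp only [map_finsuppSum, θ.map_mk_tmul, hθ] at hx
  have hzero : ∀ a ∈ c.support, monomial a (1 : k) • (c a : M) = 0 :=
    (iSupIndep_iff_finsetSum_eq_zero_imp_eq_zero _).1
      (hg.submodule_iSupIndep.comp (add_right_injective (chi n R))) c.support _
      (fun a _ => mapsTo_monomial_smul hX a _ (c a).2) hx
  refine Finset.sum_eq_zero fun a ha => ?_
  dsimp only
  by_cases haR : a.support ⊆ R
  · have haR' : a.support ⊆ (chi n R).support := by simpa using haR
    have hca : c a = 0 := Subtype.ext <|
      (bijOn_monomial_smul hX hsf haR').injOn (c a).2 (zero_mem _) (by simpa using hzero a ha)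
    rw [hca, tmul_zero]
  · rw [Ideal.Quotient.eq_zero_iff_mem.2 (monomial_one_mem_span_X_compl_iff.2 haR), zero_tmul]

variable {P : Ideal (MvPolynomial (Fin n) k)}
  {θ : ((MvPolynomial (Fin n) k ⧸ P) ⊗[k] g (chi n R)) →ₗ[MvPolynomial (Fin n) k] M}

lemma mem_range_of_mem_of_subset_support (hX : XSMulMem g) (hsf : IsSquareFree g)
    (hRmax : ∀ R' : Finset (Fin n), g (chi n R') ≠ ⊥ → R ⊆ R' → R' = R)
    (hθ : ∀ m, θ (1 ⊗ₜ m) = m) {b : Fin n →₀ ℕ} (hb : R ⊆ b.support) {m : M} (hm : m ∈ g b) :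
    m ∈ LinearMap.range θ := by
  rcases hb.eq_or_ssubset with hR | hR
  · subst hR
    obtain ⟨m₀, hm₀, rfl⟩ := surjOn_monomial_smul_chi hX hsf b hm
    exact ⟨_, (θ.map_mk_tmul P _ ⟨m₀, hm₀⟩).trans (by rw [hθ])⟩
  · rw [eq_bot_of_ssubset_support hX hsf hRmax hR, Submodule.mem_bot] at hm
    exact hm ▸ zero_mem _

lemma monomial_chi_smul_mem_range (hg : DirectSum.IsInternal g) (hX : XSMulMem g)
    (hsf : IsSquareFree g) (hRmax : ∀ R' : Finset (Fin n), g (chi n R') ≠ ⊥ → R ⊆ R' → R' = R)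
    (hθ : ∀ m, θ (1 ⊗ₜ m) = m) (m : M) :
    monomial (chi n R) (1 : k) • m ∈ LinearMap.range θ := by
  classical
  have hm : m ∈ ⨆ b, g b := hg.submodule_iSup_eq_top ▸ Submodule.mem_top
  refine Submodule.iSup_induction g (motive := fun m => monomial (chi n R) (1 : k) • m ∈ _) hm
    (fun b m hm => ?_) (by simp) fun m₁ m₂ h₁ h₂ => ?_
  · refine mem_range_of_mem_of_subset_support hX hsf hRmax hθ (b := b + chi n R) ?_
      (mapsTo_monomial_smul hX _ b hm)
    simp [Finsupp.support_add_eq_union]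
  · rw [smul_add]
    exact add_mem h₁ h₂

end SquareFree

theorem stmt_11_general (n : ℕ) (k : Type) [Field k]
    (M : Type) [AddCommGroup M] [Module (MvPolynomial (Fin n) k) M] [Module k M]
    (g : (Fin n →₀ ℕ) → Submodule k M)
    (hdecomp : DirectSum.IsInternal g)
    (hmul : ∀ (b : Fin n →₀ ℕ) (i : Fin n), ∀ m ∈ g b,
      (X i : MvPolynomial (Fin n) k) • m ∈ g (b + Finsupp.single i 1))
    (hsf : ∀ b : Fin n →₀ ℕ, ∀ i ∈ b.support,
      (∀ m ∈ g b, (X i : MvPolynomial (Fin n) k) • m = 0 → m = 0) ∧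
      (∀ m' ∈ g (b + Finsupp.single i 1), ∃ m ∈ g b,
        (X i : MvPolynomial (Fin n) k) • m = m'))
    (R : Finset (Fin n))
    (hRmax : ∀ R' : Finset (Fin n), g (chi n R') ≠ ⊥ → R ⊆ R' → R' = R)
    (P : Ideal (MvPolynomial (Fin n) k))
    (hP : P = Ideal.span ((fun i => (X i : MvPolynomial (Fin n) k)) '' {i | i ∉ R}))
    (θ : ((MvPolynomial (Fin n) k ⧸ P) ⊗[k] ↥(g (chi n R)))
      →ₗ[MvPolynomial (Fin n) k] M)
    (hθ : ∀ m : ↥(g (chi n R)),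
      θ ((1 : MvPolynomial (Fin n) k ⧸ P) ⊗ₜ[k] m) = (m : M)) :
    (∀ x, θ x = 0 → ∃ s ∉ P, s • x = 0) ∧
    (∀ m : M, ∃ s ∉ P, ∃ y, s • m = θ y) := by
  subst hP
  refine ⟨fun x hx => ⟨1, ?_, ?_⟩, fun m => ⟨monomial (chi n R) 1, ?_, ?_⟩⟩
  · rw [← C_1, ← monomial_zero', monomial_one_mem_span_X_compl_iff]
    simp
  · rw [one_smul]
    exact injective_of_map_one_tmul hdecomp hmul hsf hθ (hx.trans (map_zero θ).symm)
  · rw [monomial_one_mem_span_X_compl_iff]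
    simp
  · obtain ⟨y, hy⟩ := monomial_chi_smul_mem_range hdecomp hmul hsf hRmax hθ m
    exact ⟨y, hy.symm⟩

/-- Let `M` be a square free `ℕ^n`-graded module over `S = k[x_1,…,x_n]` (the grading is
given by `k`-submodules `g b` forming an internal direct sum, compatible with
multiplication by the variables, with `x_i : M_b → M_{b+u_i}` bijective whenever `i` lies
in the support of `b`).  Let `R` be maximal among the subsets of `[n]` with `M_R ≠ 0` and
`P = (x_i : i ∉ R)` the corresponding prime.  Then the natural `S`-linear map
`S/P ⊗_k M_R → M`, `1 ⊗ m ↦ m`, becomes an isomorphism after localization at `P`: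
its kernel and cokernel are annihilated by elements outside `P`. -/
theorem stmt_11 (n : ℕ) (k : Type) [Field k]
    (M : Type) [AddCommGroup M] [Module (MvPolynomial (Fin n) k) M]
    [Module k M] [IsScalarTower k (MvPolynomial (Fin n) k) M]
    (g : (Fin n →₀ ℕ) → Submodule k M)
    (hdecomp : DirectSum.IsInternal g)
    (hmul : ∀ (b : Fin n →₀ ℕ) (i : Fin n), ∀ m ∈ g b,
      (X i : MvPolynomial (Fin n) k) • m ∈ g (b + Finsupp.single i 1))
    (hsf : ∀ b : Fin n →₀ ℕ, ∀ i ∈ b.support,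
      (∀ m ∈ g b, (X i : MvPolynomial (Fin n) k) • m = 0 → m = 0) ∧
      (∀ m' ∈ g (b + Finsupp.single i 1), ∃ m ∈ g b,
        (X i : MvPolynomial (Fin n) k) • m = m'))
    (R : Finset (Fin n))
    (hR : g (chi n R) ≠ ⊥)
    (hRmax : ∀ R' : Finset (Fin n), g (chi n R') ≠ ⊥ → R ⊆ R' → R' = R)
    (P : Ideal (MvPolynomial (Fin n) k))
    (hP : P = Ideal.span ((fun i => (X i : MvPolynomial (Fin n) k)) '' {i | i ∉ R}))
    (θ : ((MvPolynomial (Fin n) k ⧸ P) ⊗[k] ↥(g (chi n R)))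
      →ₗ[MvPolynomial (Fin n) k] M)
    (hθ : ∀ m : ↥(g (chi n R)),
      θ ((1 : MvPolynomial (Fin n) k ⧸ P) ⊗ₜ[k] m) = (m : M)) :
    (∀ x, θ x = 0 → ∃ s ∉ P, s • x = 0) ∧
    (∀ m : M, ∃ s ∉ P, ∃ y, s • m = θ y) :=
  stmt_11_general n k M g hdecomp hmul hsf R hRmax P hP θ hθ
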